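/- arXiv:1507.08368 — 7 statements merged into one kernel-verified Lean document; each statement's English description precedes it below -/
import Mathlib

section
/- Let m : ℝ → ℝ be continuous, bounded and Lebesgue integrable. Define u = p∗m and u_x as the kernel integrals. Then u is differentiable on ℝ with u'(x) = u_x(x) for every x, u_x is differentiable on ℝ with u_x'(x) = u(x) − m(x) for every x; in particular u − u'' = m, i.e. u = (1−∂_x²)^{−1} m. -/
open MeasureTheory

/-- `u = p ∗ m`, where `p(x) = (1/2) e^{-|x|}`. -/
noncomputable def pConv (m : ℝ → ℝ) (x : ℝ) : ℝ :=
  (1 / 2) * ∫ y : ℝ, Real.exp (-|x - y|) * m y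

/-- `u_x = (∂ₓ p) ∗ m`, where `p(x) = (1/2) e^{-|x|}`. -/
noncomputable def pxConv (m : ℝ → ℝ) (x : ℝ) : ℝ :=
  -(1 / 2) * ∫ y : ℝ, Real.sign (x - y) * Real.exp (-|x - y|) * m y

/-!
Splitting the kernel at `y = x` gives `u = (e⁻ˣ L + eˣ R) / 2` and `uₓ = (eˣ R - e⁻ˣ L) / 2`,
where `L x = ∫_{y ≤ x} eʸ m y` and `R x = ∫_{y ≥ x} e⁻ʸ m y`. Since `m` is continuous,
`L' = eˣ m` and `R' = -e⁻ˣ m`. In the product rule for `u` the two boundary terms `± m / 2`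
cancel, while for `uₓ` they add up to `-m`.
-/

open Set Real

section SetIntegral

variable {E : Type*} [NormedAddCommGroup E] [NormedSpace ℝ E] {f : ℝ → E}

theorem hasDerivAt_setIntegral_Iic [CompleteSpace E] (hf : Continuous f)
    (hint : ∀ a, IntegrableOn f (Iic a)) (x : ℝ) :
    HasDerivAt (fun a => ∫ y in Iic a, f y) (f x) x := by
  have hsplit : (fun a => ∫ y in Iic a, f y) =
      fun a => (∫ y in Iic (0 : ℝ), f y) + ∫ y in (0 : ℝ)..a, f y := by
    funext a
    rw [← intervalIntegral.integral_Iic_sub_Iic (hint 0) (hint a), add_sub_cancel]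
  rw [hsplit]
  exact (intervalIntegral.integral_hasDerivAt_right (hf.intervalIntegrable _ _)
    hf.stronglyMeasurable.stronglyMeasurableAtFilter hf.continuousAt).const_add _

theorem hasDerivAt_setIntegral_Ici [CompleteSpace E] (hf : Continuous f)
    (hint : ∀ a, IntegrableOn f (Ici a)) (x : ℝ) :
    HasDerivAt (fun a => ∫ y in Ici a, f y) (-f x) x := by
  have hsplit : (fun a => ∫ y in Ici a, f y) =
      fun a => (∫ y in Ici (0 : ℝ), f y) - ∫ y in (0 : ℝ)..a, f y := by
    funext a
    rw [← intervalIntegral.integral_Ici_sub_Ici' (hint 0) (hint a), sub_sub_cancel]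
  rw [hsplit]
  exact (intervalIntegral.integral_hasDerivAt_right (hf.intervalIntegrable _ _)
    hf.stronglyMeasurable.stronglyMeasurableAtFilter hf.continuousAt).const_sub _

theorem integral_eq_setIntegral_Iic_add_setIntegral_Ici_of_eqOn {f g h : ℝ → E} {x : ℝ}
    (hg : IntegrableOn g (Iic x)) (hh : IntegrableOn h (Ici x))
    (hfg : EqOn f g (Iio x)) (hfh : EqOn f h (Ioi x)) :
    ∫ y, f y = (∫ y in Iic x, g y) + ∫ y in Ici x, h y := by
  have hf_Iic : IntegrableOn f (Iic x) := by
    rw [integrableOn_Iic_iff_integrableOn_Iio] at hg ⊢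
    exact hg.congr_fun hfg.symm measurableSet_Iio
  have hf_Ioi : IntegrableOn f (Ioi x) :=
    (hh.mono_set Ioi_subset_Ici_self).congr_fun hfh.symm measurableSet_Ioi
  rw [← intervalIntegral.integral_Iic_add_Ioi hf_Iic hf_Ioi, integral_Iic_eq_integral_Iio,
    integral_Iic_eq_integral_Iio, integral_Ici_eq_integral_Ioi,
    setIntegral_congr_fun measurableSet_Iio hfg, setIntegral_congr_fun measurableSet_Ioi hfh]

end SetIntegral

section ExpWeighted

variable {m : ℝ → ℝ}

theorem MeasureTheory.Integrable.integrableOn_Iic_exp_mul (hm : Integrable m) (a : ℝ) :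
    IntegrableOn (fun y => exp y * m y) (Iic a) := by
  refine (hm.restrict (s := Iic a)).bdd_mul (c := exp a)
    continuous_exp.aestronglyMeasurable ?_
  filter_upwards [ae_restrict_mem measurableSet_Iic] with y hy
  rw [norm_of_nonneg (exp_pos y).le]
  exact exp_le_exp.2 hy

theorem MeasureTheory.Integrable.integrableOn_Ici_exp_neg_mul (hm : Integrable m) (a : ℝ) :
    IntegrableOn (fun y => exp (-y) * m y) (Ici a) := by
  refine (hm.restrict (s := Ici a)).bdd_mul (c := exp (-a))
    (continuous_exp.comp continuous_neg).aestronglyMeasurable ?_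
  filter_upwards [ae_restrict_mem measurableSet_Ici] with y hy
  rw [norm_of_nonneg (exp_pos _).le]
  exact exp_le_exp.2 (neg_le_neg hy)

noncomputable def leftExpIntegral (m : ℝ → ℝ) (x : ℝ) : ℝ := ∫ y in Iic x, exp y * m y

noncomputable def rightExpIntegral (m : ℝ → ℝ) (x : ℝ) : ℝ := ∫ y in Ici x, exp (-y) * m y

theorem hasDerivAt_leftExpIntegral (hc : Continuous m) (hm : Integrable m) (x : ℝ) :
    HasDerivAt (leftExpIntegral m) (exp x * m x) x :=
  hasDerivAt_setIntegral_Iic (continuous_exp.mul hc) hm.integrableOn_Iic_exp_mul x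

theorem hasDerivAt_rightExpIntegral (hc : Continuous m) (hm : Integrable m) (x : ℝ) :
    HasDerivAt (rightExpIntegral m) (-(exp (-x) * m x)) x :=
  hasDerivAt_setIntegral_Ici ((continuous_exp.comp continuous_neg).mul hc)
    hm.integrableOn_Ici_exp_neg_mul x

theorem exp_neg_abs_sub_of_lt {x y : ℝ} (h : y < x) : exp (-|x - y|) = exp (-x) * exp y := by
  rw [abs_of_pos (sub_pos.2 h), neg_sub, sub_eq_add_neg, exp_add, mul_comm]

theorem exp_neg_abs_sub_of_gt {x y : ℝ} (h : x < y) : exp (-|x - y|) = exp x * exp (-y) := by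
  rw [abs_sub_comm, abs_of_pos (sub_pos.2 h), neg_sub, sub_eq_add_neg, exp_add]

theorem pConv_eq_expIntegrals (hm : Integrable m) (x : ℝ) :
    pConv m x = (1 / 2) * (exp (-x) * leftExpIntegral m x + exp x * rightExpIntegral m x) := by
  rw [pConv, integral_eq_setIntegral_Iic_add_setIntegral_Ici_of_eqOn
    ((hm.integrableOn_Iic_exp_mul x).const_mul (exp (-x)))
    ((hm.integrableOn_Ici_exp_neg_mul x).const_mul (exp x)),
    integral_const_mul, integral_const_mul, leftExpIntegral, rightExpIntegral]
  · intro y hy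
    simp only [exp_neg_abs_sub_of_lt (mem_Iio.1 hy), mul_assoc]
  · intro y hy
    simp only [exp_neg_abs_sub_of_gt (mem_Ioi.1 hy), mul_assoc]

theorem pxConv_eq_expIntegrals (hm : Integrable m) (x : ℝ) :
    pxConv m x = (1 / 2) * (exp x * rightExpIntegral m x - exp (-x) * leftExpIntegral m x) := by
  rw [pxConv, integral_eq_setIntegral_Iic_add_setIntegral_Ici_of_eqOn
    ((hm.integrableOn_Iic_exp_mul x).const_mul (exp (-x)))
    (h := fun y => -(exp x * (exp (-y) * m y)))
    ((hm.integrableOn_Ici_exp_neg_mul x).const_mul (exp x)).neg,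
    integral_const_mul, integral_neg, integral_const_mul, leftExpIntegral, rightExpIntegral]
  · ring
  · intro y hy
    simp only [sign_of_pos (sub_pos.2 (mem_Iio.1 hy)), exp_neg_abs_sub_of_lt (mem_Iio.1 hy),
      one_mul, mul_assoc]
  · intro y hy
    simp only [sign_of_neg (sub_neg.2 (mem_Ioi.1 hy)), exp_neg_abs_sub_of_gt (mem_Ioi.1 hy),
      neg_mul, one_mul, mul_assoc]

theorem hasDerivAt_pConv (hc : Continuous m) (hm : Integrable m) (x : ℝ) :
    HasDerivAt (pConv m) (pxConv m x) x := by
  have h := (((hasDerivAt_neg' x).exp.fun_mul (hasDerivAt_leftExpIntegral hc hm x)).fun_add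
    ((hasDerivAt_exp x).fun_mul (hasDerivAt_rightExpIntegral hc hm x))).const_mul (1 / 2 : ℝ)
  rw [funext (pConv_eq_expIntegrals hm), pxConv_eq_expIntegrals hm]
  exact h.congr_deriv (by ring)

theorem hasDerivAt_pxConv (hc : Continuous m) (hm : Integrable m) (x : ℝ) :
    HasDerivAt (pxConv m) (pConv m x - m x) x := by
  have h := (((hasDerivAt_exp x).fun_mul (hasDerivAt_rightExpIntegral hc hm x)).fun_sub
    ((hasDerivAt_neg' x).exp.fun_mul (hasDerivAt_leftExpIntegral hc hm x))).const_mul (1 / 2 : ℝ)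
  rw [funext (pxConv_eq_expIntegrals hm), pConv_eq_expIntegrals hm]
  have hexp : exp (-x) * exp x = 1 := by rw [← exp_add, neg_add_cancel, exp_zero]
  exact h.congr_deriv (by linear_combination (-m x) * hexp)

end ExpWeighted

theorem pConv_solves_helmholtz_general (m : ℝ → ℝ) (hcont : Continuous m)
    (hint : Integrable m) :
    (∀ x : ℝ, HasDerivAt (pConv m) (pxConv m x) x) ∧
    (∀ x : ℝ, HasDerivAt (pxConv m) (pConv m x - m x) x) ∧
    (∀ x : ℝ, pConv m x - deriv (deriv (pConv m)) x = m x) := by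
  have hu := hasDerivAt_pConv hcont hint
  have hux := hasDerivAt_pxConv hcont hint
  refine ⟨hu, hux, fun x => ?_⟩
  rw [funext fun y => (hu y).deriv, (hux x).deriv, sub_sub_cancel]

/-- If `m` is continuous, bounded and integrable, then `u = p ∗ m` satisfies
`u' = u_x`, `u_x' = u - m`; in particular `u - u'' = m`,
i.e. `u = (1 - ∂ₓ²)⁻¹ m`. -/
theorem pConv_solves_helmholtz (m : ℝ → ℝ) (hcont : Continuous m)
    (hbd : BddAbove (Set.range fun y => |m y|)) (hint : Integrable m) :
    (∀ x : ℝ, HasDerivAt (pConv m) (pxConv m x) x) ∧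
    (∀ x : ℝ, HasDerivAt (pxConv m) (pConv m x - m x) x) ∧
    (∀ x : ℝ, pConv m x - deriv (deriv (pConv m)) x = m x) :=
  pConv_solves_helmholtz_general m hcont hint
end

section
/- Let m, n : ℝ → ℝ be nonnegative, measurable and Lebesgue integrable, with H₁ = ∫_ℝ m and H₂ = ∫_ℝ n. Define u = p∗m, u_x, v = p∗n, v_x as the kernel integrals, and set M(x) = (u(x)+u_x(x))n(x) + (v_x(x)−v(x))m(x). Then for every x ∈ ℝ: −n(x)·(p∗((u+u_x)M))(x) − m(x)·(p∗((v_x−v)M))(x) ≤ H₁H₂(H₁+H₂)(m(x)+n(x)), where (p∗f)(x) = (1/2)∫_ℝ e^{−|x−y|} f(y) dy. -/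
open MeasureTheory

/-! Both kernels `e^{-|x-y|}` and `sgn(x-y) e^{-|x-y|}` are bounded by `1`, so `p ∗ f` and
`∂ₓp ∗ f` are bounded by `½ ∫ |f|`. Hence `|u + u_x| ≤ H₁`, `|v_x - v| ≤ H₂`,
`|M| ≤ H₁ n + H₂ m` with `∫ (H₁ n + H₂ m) = 2 H₁ H₂`, and the two convolutions in the claim are
bounded by `H₁² H₂` and `H₁ H₂²`. -/

theorem abs_integral_mul_le_of_abs_le {α : Type*} [MeasurableSpace α] {μ : Measure α}
    {k f g : α → ℝ} (hk : ∀ y, |k y| ≤ 1) (hg : Integrable g μ) (hfg : ∀ y, |f y| ≤ g y) :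
    |∫ y, k y * f y ∂μ| ≤ ∫ y, g y ∂μ := by
  rw [← Real.norm_eq_abs]
  refine norm_integral_le_of_norm_le hg (.of_forall fun y => ?_)
  calc ‖k y * f y‖ = |k y| * |f y| := abs_mul _ _
    _ ≤ 1 * g y := mul_le_mul (hk y) (hfg y) (abs_nonneg _) zero_le_one
    _ = g y := one_mul _

theorem abs_exp_neg_abs_le_one (r : ℝ) : |Real.exp (-|r|)| ≤ 1 := by
  rw [abs_of_pos (Real.exp_pos _), Real.exp_le_one_iff, neg_nonpos]
  exact abs_nonneg r

theorem abs_sign_le_one (r : ℝ) : |Real.sign r| ≤ 1 := by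
  rcases Real.sign_apply_eq r with h | h | h <;> rw [h] <;> norm_num

section Bounds

variable {f g : ℝ → ℝ} (hg : Integrable g) (hfg : ∀ y, |f y| ≤ g y) (x : ℝ)
include hg hfg

theorem abs_pConv_le : |pConv f x| ≤ (∫ y, g y) / 2 := by
  have h := abs_integral_mul_le_of_abs_le (fun y => abs_exp_neg_abs_le_one (x - y)) hg hfg
  rw [pConv, abs_mul, abs_of_pos one_half_pos]
  linarith

theorem abs_pxConv_le : |pxConv f x| ≤ (∫ y, g y) / 2 := by
  have hk (y : ℝ) : |Real.sign (x - y) * Real.exp (-|x - y|)| ≤ 1 := by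
    rw [abs_mul]
    exact mul_le_one₀ (abs_sign_le_one _) (abs_nonneg _) (abs_exp_neg_abs_le_one _)
  have h := abs_integral_mul_le_of_abs_le hk hg hfg
  rw [pxConv, abs_mul, abs_neg, abs_of_pos one_half_pos]
  linarith

theorem abs_pConv_add_pxConv_le : |pConv f x + pxConv f x| ≤ ∫ y, g y := by
  linarith [abs_add_le (pConv f x) (pxConv f x), abs_pConv_le hg hfg x, abs_pxConv_le hg hfg x]

theorem abs_pxConv_sub_pConv_le : |pxConv f x - pConv f x| ≤ ∫ y, g y := by
  linarith [abs_sub (pxConv f x) (pConv f x), abs_pConv_le hg hfg x, abs_pxConv_le hg hfg x]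

end Bounds

theorem abs_pConv_mul_le {a f g : ℝ → ℝ} {A : ℝ} (ha : ∀ y, |a y| ≤ A) (hA : 0 ≤ A)
    (hg : Integrable g) (hfg : ∀ y, |f y| ≤ g y) (x : ℝ) :
    |pConv (fun y => a y * f y) x| ≤ A * (∫ y, g y) / 2 := by
  have hafg (y : ℝ) : |a y * f y| ≤ A * g y := by
    rw [abs_mul]
    exact mul_le_mul (ha y) (hfg y) (abs_nonneg _) hA
  have h := abs_pConv_le (hg.const_mul A) hafg x
  rwa [integral_const_mul] at h

theorem nonlocal_term_bound_conv_general (m n : ℝ → ℝ) (H₁ H₂ : ℝ) (M : ℝ → ℝ)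
    (hmnonneg : ∀ x : ℝ, 0 ≤ m x) (hnnonneg : ∀ x : ℝ, 0 ≤ n x)
    (hmint : Integrable m) (hnint : Integrable n)
    (hH₁ : H₁ = ∫ x : ℝ, m x) (hH₂ : H₂ = ∫ x : ℝ, n x)
    (hM : M = fun x => (pConv m x + pxConv m x) * n x
        + (pxConv n x - pConv n x) * m x)
    (x : ℝ) :
    -(n x) * pConv (fun y => (pConv m y + pxConv m y) * M y) x
      - (m x) * pConv (fun y => (pxConv n y - pConv n y) * M y) x
      ≤ H₁ * H₂ * (H₁ + H₂) * (m x + n x) := by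
  have hH₁nonneg : 0 ≤ H₁ := hH₁ ▸ integral_nonneg hmnonneg
  have hH₂nonneg : 0 ≤ H₂ := hH₂ ▸ integral_nonneg hnnonneg
  have hmabs (y : ℝ) : |m y| ≤ m y := (abs_of_nonneg (hmnonneg y)).le
  have hnabs (y : ℝ) : |n y| ≤ n y := (abs_of_nonneg (hnnonneg y)).le
  have hu (y : ℝ) := hH₁ ▸ abs_pConv_add_pxConv_le hmint hmabs y
  have hv (y : ℝ) := hH₂ ▸ abs_pxConv_sub_pConv_le hnint hnabs y
  have hMle (y : ℝ) : |M y| ≤ H₁ * n y + H₂ * m y := by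
    subst hM
    refine (abs_add_le _ _).trans (add_le_add ?_ ?_) <;> rw [abs_mul]
    · exact mul_le_mul (hu y) (hnabs y) (abs_nonneg _) hH₁nonneg
    · exact mul_le_mul (hv y) (hmabs y) (abs_nonneg _) hH₂nonneg
  have hG : Integrable fun y => H₁ * n y + H₂ * m y :=
    (hnint.const_mul H₁).add (hmint.const_mul H₂)
  have hGint : ∫ y, H₁ * n y + H₂ * m y = 2 * (H₁ * H₂) := by
    rw [integral_add (hnint.const_mul H₁) (hmint.const_mul H₂), integral_const_mul,
      integral_const_mul, ← hH₁, ← hH₂]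
    ring
  have h₁ := abs_pConv_mul_le hu hH₁nonneg hG hMle x
  have h₂ := abs_pConv_mul_le hv hH₂nonneg hG hMle x
  rw [hGint] at h₁ h₂
  nlinarith [mul_le_mul_of_nonneg_left (neg_le_of_abs_le h₁) (hnnonneg x),
    mul_le_mul_of_nonneg_left (neg_le_of_abs_le h₂) (hmnonneg x),
    mul_nonneg (mul_nonneg hH₁nonneg hH₂nonneg) (mul_nonneg hH₁nonneg (hmnonneg x)),
    mul_nonneg (mul_nonneg hH₁nonneg hH₂nonneg) (mul_nonneg hH₂nonneg (hnnonneg x))]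

/-- For nonnegative, measurable, integrable `m, n` with `H₁ = ∫ m`, `H₂ = ∫ n`,
`u = p ∗ m`, `v = p ∗ n` and
`M = (u + u_x) n + (v_x - v) m`, one has the pointwise bound
`-n ⬝ (p ∗ ((u+u_x)M)) - m ⬝ (p ∗ ((v_x-v)M)) ≤ H₁H₂(H₁+H₂)(m+n)`. -/
theorem nonlocal_term_bound_conv (m n : ℝ → ℝ) (H₁ H₂ : ℝ) (M : ℝ → ℝ)
    (hm : Measurable m) (hn : Measurable n)
    (hmnonneg : ∀ x : ℝ, 0 ≤ m x) (hnnonneg : ∀ x : ℝ, 0 ≤ n x)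
    (hmint : Integrable m) (hnint : Integrable n)
    (hH₁ : H₁ = ∫ x : ℝ, m x) (hH₂ : H₂ = ∫ x : ℝ, n x)
    (hM : M = fun x => (pConv m x + pxConv m x) * n x
        + (pxConv n x - pConv n x) * m x)
    (x : ℝ) :
    -(n x) * pConv (fun y => (pConv m y + pxConv m y) * M y) x
      - (m x) * pConv (fun y => (pxConv n y - pConv n y) * M y) x
      ≤ H₁ * H₂ * (H₁ + H₂) * (m x + n x) :=
  nonlocal_term_bound_conv_general m n H₁ H₂ M hmnonneg hnnonneg hmint hnint hH₁ hH₂ hM x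
end

section
/- Let T > 0 and let w : ℝ × ℝ → ℝ be such that for each t ∈ [0,T) the function w(t,·) is differentiable, with spatial derivative w_x(t,x). Let m : ℝ × ℝ → ℝ be differentiable on [0,T) × ℝ, with partial derivatives m_t and m_x satisfying m_t(t,x) + w(t,x) m_x(t,x) + w_x(t,x) m(t,x) = 0 for all (t,x) ∈ [0,T) × ℝ. Let γ : [0,T) → ℝ be differentiable with γ'(t) = w(t,γ(t)), and assume s ↦ w_x(s,γ(s)) is continuous on [0,T). Then for every t ∈ [0,T): m(t,γ(t)) · exp(∫₀ᵗ w_x(s,γ(s)) ds) = m(0,γ(0)). In particular, m(t,γ(t)) is nonnegative (respectively zero, positive) if and only if m(0,γ(0)) is. -/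
open MeasureTheory Set

/-! Along a characteristic the chain rule turns the transport equation into the linear ODE
`M' = -w_x(t, γ t) M` for `M t = m t (γ t)`. After multiplication by the integrating factor
`exp ∫₀ᵗ w_x(s, γ s) ds` the right derivative vanishes, so the product is constant; the sign
statements follow because the factor is positive. -/

theorem HasFDerivAt.hasDerivAt_comp_graph {m : ℝ → ℝ → ℝ} {γ : ℝ → ℝ} {a b v t : ℝ}
    (hm : HasFDerivAt (fun p : ℝ × ℝ => m p.1 p.2)
      (a • ContinuousLinearMap.fst ℝ ℝ ℝ + b • ContinuousLinearMap.snd ℝ ℝ ℝ) (t, γ t))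
    (hγ : HasDerivAt γ v t) :
    HasDerivAt (fun u => m u (γ u)) (a + b * v) t := by
  simpa [Function.comp_def] using hm.comp_hasDerivAt t ((hasDerivAt_id t).prodMk hγ)

theorem ContinuousOn.hasDerivWithinAt_integral_Ici {E : Type*} [NormedAddCommGroup E]
    [NormedSpace ℝ E] [CompleteSpace E] {f : ℝ → E} {a b x : ℝ}
    (hf : ContinuousOn f (Ico a b)) (hx : x ∈ Ico a b) :
    HasDerivWithinAt (fun u => ∫ s in a..u, f s) (f x) (Ici x) x := by
  have hmem : Ico a b ∈ nhdsWithin x (Ioi x) :=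
    Filter.mem_of_superset (Ioo_mem_nhdsGT hx.2)
      (Ioo_subset_Ico_self.trans (Ico_subset_Ico_left hx.1))
  exact intervalIntegral.integral_hasDerivWithinAt_right
    ((hf.mono (Icc_subset_Ico_right hx.2)).intervalIntegrable_of_Icc hx.1)
    ((hf.stronglyMeasurableAtFilter_nhdsWithin measurableSet_Ico x).filter_mono
      (nhdsWithin_le_of_mem hmem))
    ((hf x hx).mono_of_mem_nhdsWithin hmem)

theorem mul_exp_integral_eq_of_hasDerivAt {M M' f : ℝ → ℝ} {a b t : ℝ}
    (hM : ∀ u ∈ Ico a b, HasDerivAt M (M' u) u) (hf : ContinuousOn f (Ico a b))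
    (hode : ∀ u ∈ Ico a b, M' u + f u * M u = 0) (ht : t ∈ Ico a b) :
    M t * Real.exp (∫ s in a..t, f s) = M a := by
  have hsub : Icc a t ⊆ Ico a b := Icc_subset_Ico_right ht.2
  have hint : IntegrableOn f (uIcc a t) := by
    rw [uIcc_of_le ht.1]
    exact (hf.mono hsub).integrableOn_Icc
  have hprimitive : ContinuousOn (fun u => ∫ s in a..u, f s) (Icc a t) := by
    simpa only [uIcc_of_le ht.1] using intervalIntegral.continuousOn_primitive_interval hint
  have hcont : ContinuousOn (fun u => M u * Real.exp (∫ s in a..u, f s)) (Icc a t) :=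
    ContinuousOn.mul (fun u hu => (hM u (hsub hu)).continuousAt.continuousWithinAt) hprimitive.rexp
  have hderiv : ∀ u ∈ Ico a t,
      HasDerivWithinAt (fun u => M u * Real.exp (∫ s in a..u, f s)) 0 (Ici u) u := by
    intro u hu
    have hu' : u ∈ Ico a b := ⟨hu.1, hu.2.trans ht.2⟩
    refine ((hM u hu').hasDerivWithinAt.mul
      (hf.hasDerivWithinAt_integral_Ici hu').exp).congr_deriv ?_
    linear_combination Real.exp (∫ s in a..u, f s) * hode u hu'
  simpa using constant_of_has_deriv_right_zero hcont hderiv t (right_mem_Icc.2 ht.1)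

theorem transport_conservation_along_characteristics_general (T : ℝ)
    (w wx : ℝ → ℝ → ℝ)
    (m mt mx : ℝ → ℝ → ℝ)
    (hm : ∀ t ∈ Ico (0:ℝ) T, ∀ x : ℝ,
      HasFDerivAt (fun p : ℝ × ℝ => m p.1 p.2)
        ((mt t x) • ContinuousLinearMap.fst ℝ ℝ ℝ
          + (mx t x) • ContinuousLinearMap.snd ℝ ℝ ℝ) (t, x))
    (heq : ∀ t ∈ Ico (0:ℝ) T, ∀ x : ℝ,
      mt t x + w t x * mx t x + wx t x * m t x = 0)
    (γ : ℝ → ℝ)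
    (hγ : ∀ t ∈ Ico (0:ℝ) T, HasDerivAt γ (w t (γ t)) t)
    (hcont : ContinuousOn (fun s => wx s (γ s)) (Ico (0:ℝ) T)) :
    ∀ t ∈ Ico (0:ℝ) T,
      m t (γ t) * Real.exp (∫ s in (0:ℝ)..t, wx s (γ s)) = m 0 (γ 0) ∧
      (0 ≤ m t (γ t) ↔ 0 ≤ m 0 (γ 0)) ∧
      (m t (γ t) = 0 ↔ m 0 (γ 0) = 0) ∧
      (0 < m t (γ t) ↔ 0 < m 0 (γ 0)) := by
  intro t ht
  have hconserved : m t (γ t) * Real.exp (∫ s in (0:ℝ)..t, wx s (γ s)) = m 0 (γ 0) :=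
    mul_exp_integral_eq_of_hasDerivAt (M := fun u => m u (γ u))
      (fun u hu => (hm u hu (γ u)).hasDerivAt_comp_graph (hγ u hu)) hcont
      (fun u hu => by linear_combination heq u hu (γ u)) ht
  have hexp := Real.exp_pos (∫ s in (0:ℝ)..t, wx s (γ s))
  rw [← hconserved, mul_nonneg_iff_of_pos_right hexp, mul_eq_zero_iff_right hexp.ne',
    mul_pos_iff_of_pos_right hexp]
  exact ⟨rfl, Iff.rfl, Iff.rfl, Iff.rfl⟩

/-- Conservation of `m` along characteristics: if `m` solves the transport
equation `m_t + w m_x + w_x m = 0` and `γ' = w(t, γ)`, then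
`m(t,γ(t)) exp (∫₀ᵗ w_x(s,γ(s)) ds) = m(0,γ(0))`; in particular `m(t,γ(t))`
is nonnegative (resp. zero, positive) iff `m(0,γ(0))` is. -/
theorem transport_conservation_along_characteristics (T : ℝ) (hT : 0 < T)
    (w wx : ℝ → ℝ → ℝ)
    (hw : ∀ t ∈ Ico (0:ℝ) T, ∀ x : ℝ, HasDerivAt (w t) (wx t x) x)
    (m mt mx : ℝ → ℝ → ℝ)
    (hm : ∀ t ∈ Ico (0:ℝ) T, ∀ x : ℝ,
      HasFDerivAt (fun p : ℝ × ℝ => m p.1 p.2)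
        ((mt t x) • ContinuousLinearMap.fst ℝ ℝ ℝ
          + (mx t x) • ContinuousLinearMap.snd ℝ ℝ ℝ) (t, x))
    (heq : ∀ t ∈ Ico (0:ℝ) T, ∀ x : ℝ,
      mt t x + w t x * mx t x + wx t x * m t x = 0)
    (γ : ℝ → ℝ)
    (hγ : ∀ t ∈ Ico (0:ℝ) T, HasDerivAt γ (w t (γ t)) t)
    (hcont : ContinuousOn (fun s => wx s (γ s)) (Ico (0:ℝ) T)) :
    ∀ t ∈ Ico (0:ℝ) T,
      m t (γ t) * Real.exp (∫ s in (0:ℝ)..t, wx s (γ s)) = m 0 (γ 0) ∧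
      (0 ≤ m t (γ t) ↔ 0 ≤ m 0 (γ 0)) ∧
      (m t (γ t) = 0 ↔ m 0 (γ 0) = 0) ∧
      (0 < m t (γ t) ↔ 0 < m 0 (γ 0)) :=
  transport_conservation_along_characteristics_general T w wx m mt mx hm heq γ hγ hcont
end

section
/- Let δ > 0, T > 0, and let M, N : [0,T) → ℝ be differentiable with N(t) > 0, M'(t) ≤ −M(t)² + δN(t), and N'(t) = −M(t)N(t) for all t ∈ [0,T). Then for every t ∈ [0,T): M(t)/N(t) ≤ M(0)/N(0) + δt, equivalently M(t) ≤ (M(0)/N(0) + δt) N(t). -/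
open Set

/-- Riccati-type comparison: if `N > 0`, `M' ≤ -M² + δN` and `N' = -MN` on
`[0,T)`, then `M(t)/N(t) ≤ M(0)/N(0) + δt`, equivalently
`M(t) ≤ (M(0)/N(0) + δt) N(t)`. -/
theorem riccati_ratio_bound (δ T : ℝ) (hδ : 0 < δ) (hT : 0 < T)
    (M N M' : ℝ → ℝ)
    (hNpos : ∀ t ∈ Ico (0:ℝ) T, 0 < N t)
    (hM : ∀ t ∈ Ico (0:ℝ) T, HasDerivAt M (M' t) t)
    (hM' : ∀ t ∈ Ico (0:ℝ) T, M' t ≤ -(M t) ^ 2 + δ * N t)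
    (hN : ∀ t ∈ Ico (0:ℝ) T, HasDerivAt N (-(M t * N t)) t) :
    ∀ t ∈ Ico (0:ℝ) T,
      M t / N t ≤ M 0 / N 0 + δ * t ∧ M t ≤ (M 0 / N 0 + δ * t) * N t := by
  intro t ht
  obtain ⟨ht0, htT⟩ := ht
  have h0 : (0:ℝ) ∈ Ico (0:ℝ) T := ⟨le_refl _, hT⟩
  have hN0 := hNpos 0 h0
  have key : M t / N t ≤ M 0 / N 0 + δ * t := by
    rcases eq_or_lt_of_le ht0 with h | h
    · simp [← h]
    -- f s = M s / N s - δ * s is antitone on [0, t]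
    set f : ℝ → ℝ := fun s => M s / N s - δ * s with hf
    have hsub : Icc (0:ℝ) t ⊆ Ico (0:ℝ) T := fun s hs =>
      ⟨hs.1, lt_of_le_of_lt hs.2 htT⟩
    have hderiv : ∀ s ∈ Ico (0:ℝ) T,
        HasDerivAt f ((M' s * N s - M s * (-(M s * N s))) / N s ^ 2 - δ) s := by
      intro s hs
      exact ((hM s hs).div (hN s hs) (hNpos s hs).ne').sub
        ((hasDerivAt_id s).const_mul δ |>.congr_deriv (by ring))
    have hcont : ContinuousOn f (Icc 0 t) := fun s hs =>
      ((hderiv s (hsub hs)).continuousAt).continuousWithinAt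
    have hmono : AntitoneOn f (Icc 0 t) := by
      apply antitoneOn_of_deriv_nonpos (convex_Icc 0 t) hcont
      · intro s hs
        rw [interior_Icc] at hs
        exact (hderiv s (hsub (Ioo_subset_Icc_self hs))).differentiableAt.differentiableWithinAt
      · intro s hs
        rw [interior_Icc] at hs
        have hs' := hsub (Ioo_subset_Icc_self hs)
        rw [(hderiv s hs').deriv]
        have hNs := hNpos s hs'
        have hnum : M' s * N s - M s * (-(M s * N s)) ≤ δ * N s ^ 2 := by
          have := hM' s hs'
          nlinarith [hNs, sq_nonneg (M s)]
        have : (M' s * N s - M s * (-(M s * N s))) / N s ^ 2 ≤ δ := by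
          rw [div_le_iff₀ (by positivity)]
          linarith
        linarith
    have hft : f t ≤ f 0 := hmono (left_mem_Icc.2 ht0) (right_mem_Icc.2 ht0) ht0
    simp only [hf, mul_zero, sub_zero] at hft
    linarith
  refine ⟨key, ?_⟩
  have hNt := hNpos t ⟨ht0, htT⟩
  calc M t = M t / N t * N t := by field_simp
    _ ≤ (M 0 / N 0 + δ * t) * N t := by
        exact mul_le_mul_of_nonneg_right key hNt.le
end

section
/- Let δ > 0, T > 0, and let M, N : [0,T) → ℝ be differentiable with N(t) > 0, M'(t) ≤ −M(t)² + δN(t), and N'(t) = −M(t)N(t) for all t ∈ [0,T). Then for every t ∈ [0,T): 0 < 1/N(t) ≤ 1/N(0) + (M(0)/N(0)) t + (δ/2) t². -/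
/-!
With `u = 1/N` the two equations combine into `u' = M u` and `u'' = (M' + M²) u ≤ δ N u = δ`,
so the bound is the second-order Taylor estimate for a function whose second derivative is
at most `δ`.
-/

open Set

theorem Convex.sub_le_mul_sub_of_hasDerivAt_le {D : Set ℝ} (hD : Convex ℝ D)
    {f f' : ℝ → ℝ} {C : ℝ} (hf : ∀ x ∈ D, HasDerivAt f (f' x) x) (hf' : ∀ x ∈ D, f' x ≤ C)
    {x y : ℝ} (hx : x ∈ D) (hy : y ∈ D) (hxy : x ≤ y) : f y - f x ≤ C * (y - x) :=
  hD.image_sub_le_mul_sub_of_deriv_le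
    (fun z hz => (hf z hz).continuousAt.continuousWithinAt)
    (fun z hz => (hf z (interior_subset hz)).differentiableAt.differentiableWithinAt)
    (fun z hz => (hf z (interior_subset hz)).deriv ▸ hf' z (interior_subset hz)) x hx y hy hxy

theorem Convex.le_quadratic_taylor_of_hasDerivAt_le {D : Set ℝ} (hD : Convex ℝ D)
    {f f' f'' : ℝ → ℝ} {C : ℝ} (hf : ∀ x ∈ D, HasDerivAt f (f' x) x)
    (hf' : ∀ x ∈ D, HasDerivAt f' (f'' x) x) (hf'' : ∀ x ∈ D, f'' x ≤ C)
    {a x : ℝ} (ha : a ∈ D) (hx : x ∈ D) (hax : a ≤ x) :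
    f x ≤ f a + f' a * (x - a) + C / 2 * (x - a) ^ 2 := by
  set g : ℝ → ℝ := fun y => f y - (f' a * (y - a) + C / 2 * (y - a) ^ 2)
  have hg : ∀ y ∈ D, HasDerivAt g (f' y - (f' a + C * (y - a))) y := by
    intro y hy
    have hpoly : HasDerivAt (fun y => f' a * (y - a) + C / 2 * (y - a) ^ 2)
        (f' a + C * (y - a)) y := by
      refine ((((hasDerivAt_id' y).sub_const a).const_mul (f' a)).add
        ((((hasDerivAt_id' y).sub_const a).pow 2).const_mul (C / 2))).congr_deriv ?_
      push_cast
      ring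
    exact (hf y hy).sub hpoly
  -- `f' y ≤ f' a + C (y - a)` holds only to the right of `a`.
  have hE : Convex ℝ (D ∩ Ici a) := hD.inter (convex_Ici a)
  have hg' : ∀ y ∈ D ∩ Ici a, f' y - (f' a + C * (y - a)) ≤ 0 := fun y hy => by
    linarith [hD.sub_le_mul_sub_of_hasDerivAt_le hf' hf'' ha hy.1 hy.2]
  have := hE.sub_le_mul_sub_of_hasDerivAt_le (fun y hy => hg y hy.1) hg'
    ⟨ha, self_mem_Ici⟩ ⟨hx, hax⟩ hax
  simp only [g, sub_self] at this
  linarith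

section Riccati

variable {M N M' : ℝ → ℝ} {t : ℝ}

theorem hasDerivAt_one_div_of_hasDerivAt_neg_mul (hN0 : N t ≠ 0)
    (hN : HasDerivAt N (-(M t * N t)) t) : HasDerivAt (fun s => 1 / N s) (M t / N t) t := by
  simp only [one_div]
  refine (hN.inv hN0).congr_deriv ?_
  field_simp

theorem hasDerivAt_div_of_hasDerivAt_neg_mul (hN0 : N t ≠ 0) (hM : HasDerivAt M (M' t) t)
    (hN : HasDerivAt N (-(M t * N t)) t) :
    HasDerivAt (fun s => M s / N s) ((M' t + M t ^ 2) / N t) t := by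
  refine (hM.div hN hN0).congr_deriv ?_
  field_simp
  ring

end Riccati

theorem riccati_inverse_bound_general (δ T : ℝ)
    (M N M' : ℝ → ℝ)
    (hNpos : ∀ t ∈ Ico (0:ℝ) T, 0 < N t)
    (hM : ∀ t ∈ Ico (0:ℝ) T, HasDerivAt M (M' t) t)
    (hM' : ∀ t ∈ Ico (0:ℝ) T, M' t ≤ -(M t) ^ 2 + δ * N t)
    (hN : ∀ t ∈ Ico (0:ℝ) T, HasDerivAt N (-(M t * N t)) t) :
    ∀ t ∈ Ico (0:ℝ) T,
      0 < 1 / N t ∧ 1 / N t ≤ 1 / N 0 + (M 0 / N 0) * t + (δ / 2) * t ^ 2 := by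
  intro t ht
  have hsecond : ∀ s ∈ Ico (0:ℝ) T, (M' s + M s ^ 2) / N s ≤ δ := fun s hs => by
    rw [div_le_iff₀ (hNpos s hs)]
    linarith [hM' s hs]
  have htaylor := (convex_Ico 0 T).le_quadratic_taylor_of_hasDerivAt_le
    (fun s hs => hasDerivAt_one_div_of_hasDerivAt_neg_mul (hNpos s hs).ne' (hN s hs))
    (fun s hs => hasDerivAt_div_of_hasDerivAt_neg_mul (hNpos s hs).ne' (hM s hs) (hN s hs))
    hsecond ⟨le_rfl, ht.1.trans_lt ht.2⟩ ht ht.1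
  simp only [sub_zero] at htaylor
  exact ⟨one_div_pos.2 (hNpos t ht), htaylor⟩

/-- Riccati-type comparison: if `N > 0`, `M' ≤ -M² + δN` and `N' = -MN` on
`[0,T)`, then `0 < 1/N(t) ≤ 1/N(0) + (M(0)/N(0)) t + (δ/2) t²`. -/
theorem riccati_inverse_bound (δ T : ℝ) (hδ : 0 < δ) (hT : 0 < T)
    (M N M' : ℝ → ℝ)
    (hNpos : ∀ t ∈ Ico (0:ℝ) T, 0 < N t)
    (hM : ∀ t ∈ Ico (0:ℝ) T, HasDerivAt M (M' t) t)
    (hM' : ∀ t ∈ Ico (0:ℝ) T, M' t ≤ -(M t) ^ 2 + δ * N t)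
    (hN : ∀ t ∈ Ico (0:ℝ) T, HasDerivAt N (-(M t * N t)) t) :
    ∀ t ∈ Ico (0:ℝ) T,
      0 < 1 / N t ∧ 1 / N t ≤ 1 / N 0 + (M 0 / N 0) * t + (δ / 2) * t ^ 2 :=
  riccati_inverse_bound_general δ T M N M' hNpos hM hM' hN
end

section
/- Let δ > 0, T > 0, and let M, N : [0,T) → ℝ be differentiable with N(t) > 0, M'(t) ≤ −M(t)² + δN(t), and N'(t) = −M(t)N(t) for all t ∈ [0,T). Assume M(0) < −√(2δN(0)), and set T₁ = −(M(0)+√(M(0)²−2δN(0)))/(δN(0)). Then every t ∈ [0,T) satisfies t < T₁; in particular T ≤ T₁, i.e. the solution cannot exist beyond time T₁. -/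
open Set

/-!
Along the flow, `(M/N)' = (M' + M²)/N ≤ δ` and `(1/N)' = M/N`. Integrating twice gives
`0 < 1/N(t) ≤ (1 + M(0) t + δ N(0) t²/2)/N(0)`, so the quadratic `2 + 2 M(0) t + δ N(0) t²`
stays positive on `[0,T)`. Its smaller root `T₁` is positive, hence lies outside `[0,T)`.
-/

lemma sub_le_sub_of_hasDerivAt_le {a b : ℝ} {f g f' g' : ℝ → ℝ}
    (hf : ∀ t ∈ Ico a b, HasDerivAt f (f' t) t) (hg : ∀ t ∈ Ico a b, HasDerivAt g (g' t) t)
    (hle : ∀ t ∈ Ico a b, f' t ≤ g' t) {t : ℝ} (ht : t ∈ Ico a b) :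
    f t - f a ≤ g t - g a := by
  have hmono : MonotoneOn (fun s => g s - f s) (Ico a b) := by
    refine monotoneOn_of_hasDerivWithinAt_nonneg (f' := fun s => g' s - f' s) (convex_Ico a b)
      (fun s hs => ((hg s hs).sub (hf s hs)).continuousAt.continuousWithinAt) ?_ ?_
    · intro s hs
      rw [interior_Ico] at hs ⊢
      exact ((hg s (Ioo_subset_Ico_self hs)).sub (hf s (Ioo_subset_Ico_self hs))).hasDerivWithinAt
    · intro s hs
      rw [interior_Ico] at hs
      exact sub_nonneg.mpr (hle s (Ioo_subset_Ico_self hs))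
  have := hmono ⟨le_rfl, ht.1.trans_lt ht.2⟩ ht ht.1
  simp only at this
  linarith

section Riccati

variable {δ T : ℝ} {M N M' : ℝ → ℝ}

lemma div_sub_div_le_mul_of_riccati
    (hNpos : ∀ t ∈ Ico (0:ℝ) T, 0 < N t)
    (hM : ∀ t ∈ Ico (0:ℝ) T, HasDerivAt M (M' t) t)
    (hM' : ∀ t ∈ Ico (0:ℝ) T, M' t ≤ -(M t) ^ 2 + δ * N t)
    (hN : ∀ t ∈ Ico (0:ℝ) T, HasDerivAt N (-(M t * N t)) t)
    {t : ℝ} (ht : t ∈ Ico (0:ℝ) T) :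
    M t / N t - M 0 / N 0 ≤ δ * t := by
  have hδt := sub_le_sub_of_hasDerivAt_le (f := fun s => M s / N s) (g := fun s => δ * s)
    (f' := fun s => (M' s * N s - M s * -(M s * N s)) / N s ^ 2) (g' := fun _ => δ)
    (fun s hs => (hM s hs).div (hN s hs) (hNpos s hs).ne')
    (fun s _ => by simpa using (hasDerivAt_id s).const_mul δ)
    (fun s hs => by
      have hNs := hNpos s hs
      rw [div_le_iff₀ (by positivity)]
      nlinarith [hM' s hs])
    ht
  simpa using hδt

lemma inv_sub_inv_le_of_riccati
    (hNpos : ∀ t ∈ Ico (0:ℝ) T, 0 < N t)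
    (hM : ∀ t ∈ Ico (0:ℝ) T, HasDerivAt M (M' t) t)
    (hM' : ∀ t ∈ Ico (0:ℝ) T, M' t ≤ -(M t) ^ 2 + δ * N t)
    (hN : ∀ t ∈ Ico (0:ℝ) T, HasDerivAt N (-(M t * N t)) t)
    {t : ℝ} (ht : t ∈ Ico (0:ℝ) T) :
    (N t)⁻¹ - (N 0)⁻¹ ≤ M 0 / N 0 * t + δ * t ^ 2 / 2 := by
  have hquad := sub_le_sub_of_hasDerivAt_le (f := fun s => (N s)⁻¹)
    (g := fun s => M 0 / N 0 * s + δ * s ^ 2 / 2)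
    (f' := fun s => M s / N s) (g' := fun s => M 0 / N 0 + δ * s)
    (fun s hs => ((hN s hs).inv (hNpos s hs).ne').congr_deriv (by
      field_simp [(hNpos s hs).ne']))
    (fun s _ => (((hasDerivAt_id s).const_mul (M 0 / N 0)).add
      (((hasDerivAt_pow 2 s).const_mul δ).div_const 2)).congr_deriv (by ring))
    (fun s hs => by linarith [div_sub_div_le_mul_of_riccati hNpos hM hM' hN hs])
    ht
  simpa using hquad

lemma quadratic_pos_of_riccati
    (hNpos : ∀ t ∈ Ico (0:ℝ) T, 0 < N t)
    (hM : ∀ t ∈ Ico (0:ℝ) T, HasDerivAt M (M' t) t)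
    (hM' : ∀ t ∈ Ico (0:ℝ) T, M' t ≤ -(M t) ^ 2 + δ * N t)
    (hN : ∀ t ∈ Ico (0:ℝ) T, HasDerivAt N (-(M t * N t)) t)
    {t : ℝ} (ht : t ∈ Ico (0:ℝ) T) :
    0 < 2 + 2 * M 0 * t + δ * N 0 * t ^ 2 := by
  have hN0 : 0 < N 0 := hNpos 0 ⟨le_rfl, ht.1.trans_lt ht.2⟩
  have hbound : 0 < (N 0)⁻¹ + M 0 / N 0 * t + δ * t ^ 2 / 2 := by
    linarith [inv_pos.mpr (hNpos t ht), inv_sub_inv_le_of_riccati hNpos hM hM' hN ht]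
  have hscale : 2 + 2 * M 0 * t + δ * N 0 * t ^ 2
      = 2 * N 0 * ((N 0)⁻¹ + M 0 / N 0 * t + δ * t ^ 2 / 2) := by
    field_simp
  rw [hscale]
  positivity

end Riccati

section SmallerRoot

variable {b c : ℝ}

/-- The smaller root of `c x² + 2 b x + 2`. -/
noncomputable def smallerRoot (b c : ℝ) : ℝ := -((b + √(b ^ 2 - 2 * c)) / c)

lemma sq_sub_two_mul_pos_of_lt_neg_sqrt (hc : 0 < c) (hb : b < -√(2 * c)) :
    0 < b ^ 2 - 2 * c := by
  have hsq : √(2 * c) ^ 2 = 2 * c := Real.sq_sqrt (by positivity)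
  nlinarith [Real.sqrt_nonneg (2 * c)]

lemma smallerRoot_pos (hc : 0 < c) (hb : b < -√(2 * c)) : 0 < smallerRoot b c := by
  have hdisc := sq_sub_two_mul_pos_of_lt_neg_sqrt hc hb
  have hb0 : b < 0 := hb.trans_le (neg_nonpos.mpr (Real.sqrt_nonneg _))
  have hsqrt : √(b ^ 2 - 2 * c) < -b := by
    rw [Real.sqrt_lt' (by linarith)]
    linarith
  rw [smallerRoot, ← neg_div]
  exact div_pos (by linarith) hc

lemma smallerRoot_eval (hc : 0 < c) (hb : b < -√(2 * c)) :
    2 + 2 * b * smallerRoot b c + c * smallerRoot b c ^ 2 = 0 := by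
  have hs := Real.sq_sqrt (sq_sub_two_mul_pos_of_lt_neg_sqrt hc hb).le
  rw [smallerRoot]
  field_simp
  linear_combination hs

end SmallerRoot

/-- Finite-time blow-up: if `N > 0`, `M' ≤ -M² + δN`, `N' = -MN` on `[0,T)` and
`M(0) < -√(2δN(0))`, then with
`T₁ = -(M(0) + √(M(0)² - 2δN(0)))/(δN(0))` every `t ∈ [0,T)` satisfies
`t < T₁`; in particular `T ≤ T₁`, i.e. the solution cannot exist beyond `T₁`. -/
theorem riccati_blow_up_time_bound (δ T T₁ : ℝ) (hδ : 0 < δ) (hT : 0 < T)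
    (M N M' : ℝ → ℝ)
    (hNpos : ∀ t ∈ Ico (0:ℝ) T, 0 < N t)
    (hM : ∀ t ∈ Ico (0:ℝ) T, HasDerivAt M (M' t) t)
    (hM' : ∀ t ∈ Ico (0:ℝ) T, M' t ≤ -(M t) ^ 2 + δ * N t)
    (hN : ∀ t ∈ Ico (0:ℝ) T, HasDerivAt N (-(M t * N t)) t)
    (hM0 : M 0 < -Real.sqrt (2 * δ * N 0))
    (hT₁ : T₁ = -((M 0 + Real.sqrt ((M 0) ^ 2 - 2 * δ * N 0)) / (δ * N 0))) :
    (∀ t ∈ Ico (0:ℝ) T, t < T₁) ∧ T ≤ T₁ := by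
  have hc : 0 < δ * N 0 := mul_pos hδ (hNpos 0 ⟨le_rfl, hT⟩)
  rw [mul_assoc] at hM0
  have hT₁eq : T₁ = smallerRoot (M 0) (δ * N 0) := by rw [hT₁, smallerRoot, mul_assoc]
  have hT₁pos : 0 < T₁ := hT₁eq ▸ smallerRoot_pos hc hM0
  have hT₁root : 2 + 2 * M 0 * T₁ + δ * N 0 * T₁ ^ 2 = 0 := hT₁eq ▸ smallerRoot_eval hc hM0
  have hTle : T ≤ T₁ := by
    by_contra! hlt
    have := quadratic_pos_of_riccati hNpos hM hM' hN ⟨hT₁pos.le, hlt⟩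
    linarith
  exact ⟨fun t ht => ht.2.trans_le hTle, hTle⟩
end

section
/- Let δ > 0, and let M, N : [0,T₁) → ℝ be differentiable with N(t) > 0, M'(t) ≤ −M(t)² + δN(t), and N'(t) = −M(t)N(t) for all t ∈ [0,T₁), where M(0) < −√(2δN(0)) and T₁ = −(M(0)+√(M(0)²−2δN(0)))/(δN(0)). Then N(t) → +∞ and M(t) → −∞ as t → T₁⁻. -/
open Set Filter Topology

/-!
Along the flow, `(M / N)' = (M' + M²) / N ≤ δ` and `(1 / N)' = M / N`. Integrating twice,
`1 / N` lies below the quadratic `Q(t) = 1 / N(0) + (M(0) / N(0)) t + (δ / 2) t²`, whose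
smaller root is `T₁`. Hence `1 / N → 0⁺` as `t → T₁⁻`, and since
`M / N ≤ M(0) / N(0) + δ T₁ = -√(M(0)² - 2δN(0)) / N(0) < 0`, `M` is bounded above by a
negative multiple of `N`.
-/

theorem le_of_hasDerivAt_le_of_mem_Ico {f g f' g' : ℝ → ℝ} {a b : ℝ}
    (hf : ∀ x ∈ Ico a b, HasDerivAt f (f' x) x) (hg : ∀ x ∈ Ico a b, HasDerivAt g (g' x) x)
    (ha : f a ≤ g a) (hle : ∀ x ∈ Ico a b, f' x ≤ g' x) : ∀ x ∈ Ico a b, f x ≤ g x := by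
  intro x hx
  have hsub : Icc a x ⊆ Ico a b := Icc_subset_Ico_right hx.2
  have hsub' : Ico a x ⊆ Ico a b := Ico_subset_Ico_right hx.2.le
  refine image_le_of_deriv_right_le_deriv_boundary
    (fun y hy => (hf y (hsub hy)).continuousAt.continuousWithinAt)
    (fun y hy => (hf y (hsub' hy)).hasDerivWithinAt) ha
    (fun y hy => (hg y (hsub hy)).continuousAt.continuousWithinAt)
    (fun y hy => (hg y (hsub' hy)).hasDerivWithinAt)
    (fun y hy => hle y (hsub' hy)) ⟨hx.1, le_rfl⟩

theorem tendsto_atTop_of_inv_le {α : Type*} {l : Filter α} {f g : α → ℝ}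
    (hf : ∀ᶠ x in l, 0 < f x) (hfg : ∀ᶠ x in l, (f x)⁻¹ ≤ g x) (hg : Tendsto g l (𝓝 0)) :
    Tendsto f l atTop := by
  have hinv : Tendsto (fun x => (f x)⁻¹) l (𝓝[>] 0) :=
    tendsto_nhdsWithin_of_tendsto_nhds_of_eventually_within _
      (tendsto_of_tendsto_of_tendsto_of_le_of_le' tendsto_const_nhds hg
        (hf.mono fun x hx => (inv_pos.2 hx).le) hfg)
      (hf.mono fun x hx => inv_pos.2 hx)
  simpa [Pi.inv_def] using hinv.inv_tendsto_nhdsGT_zero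

section Riccati

variable {δ a b : ℝ} {M N M' : ℝ → ℝ}
  (hNpos : ∀ t ∈ Ico a b, 0 < N t)
  (hN : ∀ t ∈ Ico a b, HasDerivAt N (-(M t * N t)) t)
include hNpos hN

theorem div_le_add_mul_of_riccati (hM : ∀ t ∈ Ico a b, HasDerivAt M (M' t) t)
    (hM' : ∀ t ∈ Ico a b, M' t ≤ -(M t) ^ 2 + δ * N t) :
    ∀ t ∈ Ico a b, M t / N t ≤ M a / N a + δ * (t - a) := by
  refine le_of_hasDerivAt_le_of_mem_Ico (f' := fun t => (M' t + M t ^ 2) / N t)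
    (g' := fun _ => δ) (fun t ht => ?_) (fun t _ => ?_) (by simp) (fun t ht => ?_)
  · refine ((hM t ht).div (hN t ht) (hNpos t ht).ne').congr_deriv ?_
    field_simp [(hNpos t ht).ne']
    ring
  · simpa using ((hasDerivAt_id t).sub_const a).const_mul δ
  · rw [div_le_iff₀ (hNpos t ht)]
    linarith [hM' t ht]

theorem inv_le_quadratic_of_div_le
    (hP : ∀ t ∈ Ico a b, M t / N t ≤ M a / N a + δ * (t - a)) :
    ∀ t ∈ Ico a b, (N t)⁻¹ ≤ (N a)⁻¹ + M a / N a * (t - a) + δ / 2 * (t - a) ^ 2 := by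
  refine le_of_hasDerivAt_le_of_mem_Ico (f' := fun t => M t / N t)
    (g' := fun t => M a / N a + δ * (t - a)) (fun t ht => ?_) (fun t _ => ?_) (by simp) hP
  · refine ((hN t ht).inv (hNpos t ht).ne').congr_deriv ?_
    field_simp [(hNpos t ht).ne']
  · have hlin := (hasDerivAt_id t).sub_const a
    refine ((hlin.const_mul (M a / N a)).const_add _ |>.add
      ((hlin.pow 2).const_mul (δ / 2))).congr_deriv ?_
    simp only [id]
    ring

end Riccati

section Root

variable {δ m n s : ℝ}

theorem sq_sub_pos_of_lt_neg_sqrt (hδn : 0 ≤ 2 * δ * n) (hm : m < -√(2 * δ * n)) :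
    0 < m ^ 2 - 2 * δ * n := by
  nlinarith [Real.sq_sqrt hδn, Real.sqrt_nonneg (2 * δ * n)]

theorem quadratic_eq_zero_at_root (hδ : δ ≠ 0) (hn : n ≠ 0) (hs : s ^ 2 = m ^ 2 - 2 * δ * n) :
    n⁻¹ + m / n * -((m + s) / (δ * n)) + δ / 2 * (-((m + s) / (δ * n))) ^ 2 = 0 := by
  field_simp
  linear_combination hs

theorem quadratic_root_pos (hδ : 0 < δ) (hn : 0 < n) (hm : m < -√(2 * δ * n)) :
    0 < -((m + √(m ^ 2 - 2 * δ * n)) / (δ * n)) := by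
  have hm0 : m < 0 := hm.trans_le (neg_nonpos.2 (Real.sqrt_nonneg _))
  have hlt : √(m ^ 2 - 2 * δ * n) < -m := by
    rw [Real.sqrt_lt' (by linarith)]
    nlinarith [mul_pos hδ hn]
  exact neg_pos.2 (div_neg_of_neg_of_pos (by linarith) (by positivity))

theorem div_add_mul_root (hδ : δ ≠ 0) (hn : n ≠ 0) :
    m / n + δ * -((m + s) / (δ * n)) = -(s / n) := by
  field_simp
  ring

end Root

/-- Blow-up at `T₁`: if `N > 0`, `M' ≤ -M² + δN`, `N' = -MN` on `[0,T₁)` with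
`M(0) < -√(2δN(0))` and `T₁ = -(M(0) + √(M(0)² - 2δN(0)))/(δN(0))`, then
`N(t) → +∞` and `M(t) → -∞` as `t → T₁⁻`. -/
theorem riccati_blow_up_at_T₁ (δ T₁ : ℝ) (hδ : 0 < δ)
    (M N M' : ℝ → ℝ) (hN0 : 0 < N 0)
    (hNpos : ∀ t ∈ Ico (0:ℝ) T₁, 0 < N t)
    (hM : ∀ t ∈ Ico (0:ℝ) T₁, HasDerivAt M (M' t) t)
    (hM' : ∀ t ∈ Ico (0:ℝ) T₁, M' t ≤ -(M t) ^ 2 + δ * N t)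
    (hN : ∀ t ∈ Ico (0:ℝ) T₁, HasDerivAt N (-(M t * N t)) t)
    (hM0 : M 0 < -Real.sqrt (2 * δ * N 0))
    (hT₁ : T₁ = -((M 0 + Real.sqrt ((M 0) ^ 2 - 2 * δ * N 0)) / (δ * N 0))) :
    Tendsto N (nhdsWithin T₁ (Iio T₁)) atTop ∧
    Tendsto M (nhdsWithin T₁ (Iio T₁)) atBot := by
  have hdisc := sq_sub_pos_of_lt_neg_sqrt (by positivity) hM0
  set s := √(M 0 ^ 2 - 2 * δ * N 0)
  have hs2 : s ^ 2 = M 0 ^ 2 - 2 * δ * N 0 := Real.sq_sqrt hdisc.le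
  have hT₁pos : 0 < T₁ := hT₁ ▸ quadratic_root_pos hδ hN0 hM0
  have hP := div_le_add_mul_of_riccati hNpos hN hM hM'
  have hQ := inv_le_quadratic_of_div_le hNpos hN hP
  simp only [sub_zero] at hP hQ
  have hnear : ∀ᶠ t in 𝓝[<] T₁, t ∈ Ico 0 T₁ := Ico_mem_nhdsLT hT₁pos
  have hroot : (N 0)⁻¹ + M 0 / N 0 * T₁ + δ / 2 * T₁ ^ 2 = 0 := by
    rw [hT₁]
    exact quadratic_eq_zero_at_root hδ.ne' hN0.ne' hs2
  have hQT₁ : Tendsto (fun t => (N 0)⁻¹ + M 0 / N 0 * t + δ / 2 * t ^ 2) (𝓝[<] T₁) (𝓝 0) :=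
    ((by fun_prop : Continuous fun t : ℝ => (N 0)⁻¹ + M 0 / N 0 * t + δ / 2 * t ^ 2).tendsto'
      T₁ 0 hroot).mono_left nhdsWithin_le_nhds
  have hNtop : Tendsto N (𝓝[<] T₁) atTop :=
    tendsto_atTop_of_inv_le (hnear.mono hNpos) (hnear.mono hQ) hQT₁
  have hMN : ∀ t ∈ Ico 0 T₁, M t ≤ -(s / N 0) * N t := fun t ht => by
    rw [← div_add_mul_root hδ.ne' hN0.ne', ← hT₁, ← div_le_iff₀ (hNpos t ht)]
    nlinarith [hP t ht, ht.2]
  have hslope : -(s / N 0) < 0 := neg_neg_iff_pos.2 (div_pos (Real.sqrt_pos.2 hdisc) hN0)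
  exact ⟨hNtop, tendsto_atBot_mono' _ (hnear.mono hMN)
    ((tendsto_const_mul_atBot_of_neg hslope).2 hNtop)⟩
end
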